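/- If (σ_n)_{n∈ℕ} are victorious probabilistic trace strategies and (p_n) is a distribution on ℕ, then the countable convex combination ∑_n p_n·σ_n is victorious. -/

import Mathlib

open scoped ENNReal Classical

/-- Active-ending plays over signature `(K, ar)`: alternating sequences of
outputs `k : K` and inputs `i : ar k`. -/
inductive APlay (K : Type) (ar : K → Type) : Type
  | nil : APlay K ar
  | cons (k : K) (i : ar k) (s : APlay K ar) : APlay K ar

variable {K : Type} {ar : K → Type}

/-- Append an output-input pair at the end of an active-ending play. -/
def APlay.snoc : APlay K ar → (k : K) → ar k → APlay K ar
  | .nil, k, i => .cons k i .nil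
  | .cons l j s, k, i => .cons l j (s.snoc k i)

/-- The number of output-input cycles in an active-ending play. -/
def APlay.len : APlay K ar → ℕ
  | .nil => 0
  | .cons _ _ s => s.len + 1

/-- A play-measure: values in `[0,1]` on passive-ending plays (an active play
followed by an output), with `σ_act t = ∑_k σ_pass (t.k)` and
`σ_act (s.k.i) = σ_pass (s.k)`. -/
structure PlayMeasure (K : Type) (ar : K → Type) where
  pass : APlay K ar → K → ℝ≥0∞
  le_one : ∀ t, (∑' k, pass t k) ≤ 1
  consistent : ∀ s k (i : ar k), pass s k = ∑' l, pass (s.snoc k i) l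

/-- The value of a play-measure on an active-ending play. -/
noncomputable def PlayMeasure.act (σ : PlayMeasure K ar) (t : APlay K ar) : ℝ≥0∞ :=
  ∑' k, σ.pass t k

/-- The weight of a play-measure. -/
noncomputable def PlayMeasure.weight (σ : PlayMeasure K ar) : ℝ≥0∞ := σ.act .nil

/-- A partial counterstrategy, given by its set of active-ending plays. -/
structure Counterstrategy (K : Type) (ar : K → Type) where
  act : Set (APlay K ar)
  nil_mem : APlay.nil ∈ act
  prefix_closed : ∀ (s : APlay K ar) (k : K) (i : ar k), s.snoc k i ∈ act → s ∈ act
  deterministic : ∀ (s : APlay K ar) (k : K) (i j : ar k),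
      s.snoc k i ∈ act → s.snoc k j ∈ act → i = j

/-- The passive-ending play `s.k` is a `ρ`-failure: it is in `ρ_pass`
and has no prescribed input. -/
def Counterstrategy.Fails (ρ : Counterstrategy K ar) (s : APlay K ar) (k : K) : Prop :=
  s ∈ ρ.act ∧ ∀ i : ar k, s.snoc k i ∉ ρ.act

/-- `P^m_ρ(σ)`: the sum of `σ_act` over the length-`m` plays in `ρ_act`. -/
noncomputable def contProb (ρ : Counterstrategy K ar) (σ : PlayMeasure K ar) (m : ℕ) : ℝ≥0∞ :=
  ∑' s : {s : APlay K ar // s ∈ ρ.act ∧ s.len = m}, σ.act s.1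

/-- The sum of `σ_pass` over the `ρ`-failures of length `m`. -/
noncomputable def failProb (ρ : Counterstrategy K ar) (σ : PlayMeasure K ar) (m : ℕ) : ℝ≥0∞ :=
  ∑' p : {p : APlay K ar × K // ρ.Fails p.1 p.2 ∧ p.1.len = m}, σ.pass p.1.1 p.1.2

/-- A play-measure is victorious when against every partial counterstrategy,
the probability of play continuing forever is zero. -/
def Victorious (σ : PlayMeasure K ar) : Prop :=
  ∀ ρ : Counterstrategy K ar, (⨅ m, contProb ρ σ m) = 0

/-- The length-`n` prefix of an infinite play. -/
def prefixPlay (f : ℕ → Σ k : K, ar k) : ℕ → APlay K ar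
  | 0 => .nil
  | n + 1 => (prefixPlay f n).snoc (f n).1 (f n).2

/-- A play-measure is well-founded when no infinite play has all its
prefixes in the support. -/
def PlayMeasure.WellFoundedPM (σ : PlayMeasure K ar) : Prop :=
  ¬ ∃ f : ℕ → Σ k : K, ar k, ∀ n, 0 < σ.pass (prefixPlay f n) (f n).1

/-- A play-measure is finitely branching when each active-ending play has
finitely many possible next outputs in the support. -/
def PlayMeasure.FinBranch (σ : PlayMeasure K ar) : Prop :=
  ∀ t : APlay K ar, {k : K | 0 < σ.pass t k}.Finite

/-- Finitely founded: well-founded and finitely branching. -/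
def PlayMeasure.FinFounded (σ : PlayMeasure K ar) : Prop :=
  σ.WellFoundedPM ∧ σ.FinBranch

/-- `f` is uniformly below `g`: there is `d > 0` with `f s + d ≤ g s` on
every passive-ending play `s` in the support of `f`. -/
def UBelow (f g : APlay K ar → K → ℝ≥0∞) : Prop :=
  ∃ d : ℝ≥0∞, 0 < d ∧ ∀ s k, 0 < f s k → f s k + d ≤ g s k

/-!
Against a fixed counterstrategy `ρ`, the continuation probability `P^m_ρ` is linear in the
strategy, so `P^m_ρ(∑ pₙ σₙ) = ∑ pₙ P^m_ρ(σₙ)`. Each `P^m_ρ(σₙ)` decreases in `m`: as `ρ` is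
deterministic, a length-`m+1` play of `ρ` is determined by its length-`m` prefix and last output,
and its `σ_act` is the `σ_pass` of that pair. The terms are dominated by the summable `pₙ`, so by
monotone convergence the infimum over `m` passes inside the sum, where every term is `0`.
-/

namespace APlay

theorem eq_nil_of_len_eq_zero {t : APlay K ar} (h : t.len = 0) : t = .nil := by
  cases t with
  | nil => rfl
  | cons k i s => simp [APlay.len] at h

theorem len_snoc (s : APlay K ar) (k : K) (i : ar k) : (s.snoc k i).len = s.len + 1 := by
  induction s with
  | nil => rfl
  | cons l j r ih => simp [APlay.snoc, APlay.len, ih]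

theorem exists_eq_snoc_of_ne_nil : ∀ {t : APlay K ar}, t ≠ .nil →
    ∃ (s : APlay K ar) (k : K) (i : ar k), t = s.snoc k i
  | .nil, h => absurd rfl h
  | .cons k i .nil, _ => ⟨.nil, k, i, rfl⟩
  | .cons k i (.cons l j r), _ => by
    obtain ⟨s, k', i', hs⟩ := exists_eq_snoc_of_ne_nil (t := .cons l j r) nofun
    exact ⟨.cons k i s, k', i', by rw [hs]; rfl⟩

theorem exists_eq_snoc_of_len_eq_succ {t : APlay K ar} {m : ℕ} (h : t.len = m + 1) :
    ∃ (s : APlay K ar) (k : K) (i : ar k), t = s.snoc k i ∧ s.len = m := by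
  obtain ⟨s, k, i, rfl⟩ := exists_eq_snoc_of_ne_nil (t := t) (by rintro rfl; simp [len] at h)
  exact ⟨s, k, i, rfl, by rw [len_snoc] at h; omega⟩

end APlay

theorem PlayMeasure.weight_le_one (σ : PlayMeasure K ar) : σ.weight ≤ 1 :=
  σ.le_one .nil

theorem PlayMeasure.act_snoc (σ : PlayMeasure K ar) (s : APlay K ar) (k : K) (i : ar k) :
    σ.act (s.snoc k i) = σ.pass s k :=
  (σ.consistent s k i).symm

section contProb

variable (ρ : Counterstrategy K ar) (σ : PlayMeasure K ar)

theorem contProb_zero : contProb ρ σ 0 = σ.weight := by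
  rw [contProb, tsum_eq_single (⟨.nil, ρ.nil_mem, rfl⟩ : {s // s ∈ ρ.act ∧ s.len = 0})
    fun t ht => absurd (Subtype.ext (APlay.eq_nil_of_len_eq_zero t.2.2)) ht]
  rfl

theorem contProb_succ_le (m : ℕ) : contProb ρ σ (m + 1) ≤ contProb ρ σ m := by
  let T := {t : APlay K ar // t ∈ ρ.act ∧ t.len = m + 1}
  let S := {s : APlay K ar // s ∈ ρ.act ∧ s.len = m}
  have last_move : ∀ t : T, ∃ d : S × K, ∃ i : ar d.2, t.1 = d.1.1.snoc d.2 i := by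
    rintro ⟨t, ht, hlen⟩
    obtain ⟨s, k, i, rfl, hs⟩ := APlay.exists_eq_snoc_of_len_eq_succ hlen
    exact ⟨(⟨s, ρ.prefix_closed s k i ht, hs⟩, k), i, rfl⟩
  choose F I hF using last_move
  have hF_inj : Function.Injective F := by
    intro t t' h
    obtain ⟨i', ht'⟩ : ∃ i' : ar (F t).2, t'.1 = (F t).1.1.snoc (F t).2 i' := h ▸ ⟨I t', hF t'⟩
    have hi : I t = i' := ρ.deterministic _ _ _ _ (hF t ▸ t.2.1) (ht' ▸ t'.2.1)
    exact Subtype.ext (by rw [hF t, ht', hi])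
  calc contProb ρ σ (m + 1) = ∑' t : T, σ.pass (F t).1.1 (F t).2 :=
        tsum_congr fun t => by rw [hF t, PlayMeasure.act_snoc]
    _ ≤ ∑' d : S × K, σ.pass d.1.1 d.2 :=
        ENNReal.tsum_comp_le_tsum_of_injective hF_inj fun d => σ.pass d.1.1 d.2
    _ = contProb ρ σ m := ENNReal.tsum_prod (f := fun (s : S) k => σ.pass s.1 k)

theorem antitone_contProb : Antitone (contProb ρ σ) :=
  antitone_nat_of_succ_le (contProb_succ_le ρ σ)

theorem contProb_le_one (m : ℕ) : contProb ρ σ m ≤ 1 :=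
  calc contProb ρ σ m ≤ contProb ρ σ 0 := antitone_contProb ρ σ m.zero_le
    _ = σ.weight := contProb_zero ρ σ
    _ ≤ 1 := σ.weight_le_one

theorem contProb_eq_tsum_mul {ι : Type*} (σ : ι → PlayMeasure K ar) (p : ι → ℝ≥0∞)
    (τ : PlayMeasure K ar) (hτ : ∀ s k, τ.pass s k = ∑' n, p n * (σ n).pass s k) (m : ℕ) :
    contProb ρ τ m = ∑' n, p n * contProb ρ (σ n) m := by
  simp only [contProb, PlayMeasure.act, hτ, ← ENNReal.tsum_mul_left]
  exact (tsum_congr fun _ => ENNReal.tsum_comm).trans ENNReal.tsum_comm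

end contProb

theorem ENNReal.tsum_iInf_of_antitone {ι : Type*} {f : ℕ → ι → ℝ≥0∞} (hf : Antitone f)
    (h0 : ∑' i, f 0 i ≠ ∞) : ∑' i, ⨅ n, f n i = ⨅ n, ∑' i, f n i := by
  let : MeasurableSpace ι := ⊤
  simpa only [MeasureTheory.lintegral_count] using
    MeasureTheory.lintegral_iInf (μ := MeasureTheory.Measure.count)
      (fun _ => measurable_from_top) hf (by rwa [MeasureTheory.lintegral_count])

theorem stmt_7_general {K : Type} {ar : K → Type}
    (σ : ℕ → PlayMeasure K ar)
    (hv : ∀ n, Victorious (σ n))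
    (p : ℕ → ℝ≥0∞) (hp : (∑' n, p n) = 1)
    (τ : PlayMeasure K ar)
    (hτ : ∀ s k, τ.pass s k = ∑' n, p n * (σ n).pass s k) :
    Victorious τ := by
  intro ρ
  have h_anti : Antitone fun m n => p n * contProb ρ (σ n) m :=
    fun _ _ hm n => mul_le_mul_right (antitone_contProb ρ (σ n) hm) _
  have h_fin : ∑' n, p n * contProb ρ (σ n) 0 ≠ ∞ :=
    ne_top_of_le_ne_top (hp ▸ ENNReal.one_ne_top) <|
      ENNReal.tsum_le_tsum fun n => mul_le_of_le_one_right zero_le (contProb_le_one ρ (σ n) 0)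
  simp only [contProb_eq_tsum_mul ρ σ p τ hτ, ← ENNReal.tsum_iInf_of_antitone h_anti h_fin]
  refine ENNReal.tsum_eq_zero.2 fun n => le_antisymm ?_ zero_le
  calc ⨅ m, p n * contProb ρ (σ n) m ≤ ⨅ m, contProb ρ (σ n) m :=
        iInf_mono fun m => mul_le_of_le_one_left zero_le (hp ▸ ENNReal.le_tsum n)
    _ = 0 := hv n ρ

/-- The countable convex combination `∑_n p_n·σ_n` of victorious probabilistic
trace strategies is victorious. -/
theorem stmt_7 {K : Type} {ar : K → Type}
    (σ : ℕ → PlayMeasure K ar) (hw : ∀ n, (σ n).weight = 1)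
    (hv : ∀ n, Victorious (σ n))
    (p : ℕ → ℝ≥0∞) (hp : (∑' n, p n) = 1)
    (τ : PlayMeasure K ar)
    (hτ : ∀ s k, τ.pass s k = ∑' n, p n * (σ n).pass s k) :
    Victorious τ :=
  stmt_7_general σ hv p hp τ hτ
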